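/- arXiv:0810.0772 — 4 statements merged into one kernel-verified Lean document; each statement's English description precedes it below -/
import Mathlib

section
/- In a real Hilbert space, every Chebyshev set whose metric projection is continuous is convex. -/
/-!
Let `a, b ∈ K` and `m = s • a + t • b`. The function `h z = ‖z - m‖² - d_K(z)²` is a supremum
of affine functions of `z`, one for each `u ∈ K`, and the one for `u = P z` touches it at `z`;
so `h` is convex with subgradient `2 (P z - m)` at `z`, and it is bounded below because
`a, b ∈ K`. Minimizing the strongly convex regularization `h + ε ‖·‖²` (possible by
completeness) and writing the first-order condition, which needs continuity of `P`, gives points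
`z` with `‖P z - m‖` arbitrarily small. Hence `m ∈ closure K`, so `d_K(m) = 0` and `m = P m ∈ K`.
-/

open Filter Metric Set Topology
open scoped RealInnerProductSpace

section Subgradient

variable {E : Type*} [NormedAddCommGroup E] [InnerProductSpace ℝ E]

def HasSubgradients (f : E → ℝ) (g : E → E) : Prop :=
  ∀ z w, f z + ⟪g z, w - z⟫ ≤ f w

theorem hasSubgradients_norm_sq : HasSubgradients (fun x : E ↦ ‖x‖ ^ 2) fun z ↦ (2 : ℝ) • z := by
  intro z w
  have h := norm_sub_sq_real w z
  rw [real_inner_smul_left, inner_sub_right, real_inner_self_eq_norm_sq]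
  nlinarith [sq_nonneg ‖w - z‖, real_inner_comm w z]

namespace HasSubgradients

variable {f f₁ f₂ : E → ℝ} {g g₁ g₂ : E → E}

theorem add (h₁ : HasSubgradients f₁ g₁) (h₂ : HasSubgradients f₂ g₂) :
    HasSubgradients (f₁ + f₂) (g₁ + g₂) := fun z w ↦ by
  simpa only [Pi.add_apply, inner_add_left, add_add_add_comm] using add_le_add (h₁ z w) (h₂ z w)

theorem const_mul (hf : HasSubgradients f g) {c : ℝ} (hc : 0 ≤ c) :
    HasSubgradients (fun x ↦ c * f x) (c • g) := fun z w ↦ by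
  simpa only [Pi.smul_apply, real_inner_smul_left, mul_add] using
    mul_le_mul_of_nonneg_left (hf z w) hc

theorem convexOn (hf : HasSubgradients f g) : ConvexOn ℝ univ f := by
  refine ⟨convex_univ, fun x _ y _ a b ha hb hab ↦ ?_⟩
  set z := a • x + b • y
  have hcomb : a • (x - z) + b • (y - z) = 0 := by
    obtain rfl : b = 1 - a := by linarith
    module
  have := add_le_add (mul_le_mul_of_nonneg_left (hf z x) ha) (mul_le_mul_of_nonneg_left (hf z y) hb)
  have hi : a * ⟪g z, x - z⟫ + b * ⟪g z, y - z⟫ = 0 := by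
    rw [← real_inner_smul_right, ← real_inner_smul_right, ← inner_add_right, hcomb,
      inner_zero_right]
  have hfz : a * f z + b * f z = f z := by rw [← add_mul, hab, one_mul]
  simp only [smul_eq_mul]
  linarith

theorem eq_zero_of_isMinOn (hf : HasSubgradients f g) {z : E} (hmin : IsMinOn f univ z)
    (hg : ContinuousAt g z) : g z = 0 := by
  have hdir : ∀ v, 0 ≤ ⟪g z, v⟫ := by
    intro v
    have hline : Tendsto (fun τ : ℝ ↦ z + τ • v) (𝓝[>] 0) (𝓝 z) :=
      tendsto_nhdsWithin_of_tendsto_nhds <|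
        (by fun_prop : Continuous fun τ : ℝ ↦ z + τ • v).tendsto' 0 z (by simp)
    refine ge_of_tendsto ((hg.tendsto.comp hline).inner tendsto_const_nhds) ?_
    filter_upwards [self_mem_nhdsWithin] with τ (hτ : 0 < τ)
    have h := hf (z + τ • v) z
    have hmin' := isMinOn_univ_iff.1 hmin (z + τ • v)
    rw [sub_add_cancel_left, inner_neg_right, real_inner_smul_right] at h
    have : 0 ≤ τ * ⟪g (z + τ • v), v⟫ := by linarith
    exact nonneg_of_mul_nonneg_right this hτ
  simpa [inner_neg_right] using hdir (-g z)

end HasSubgradients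

end Subgradient

section StrongConvex

variable {E : Type*} [NormedAddCommGroup E] [NormedSpace ℝ E] {f : E → ℝ} {m c : ℝ}

theorem StrongConvexOn.mul_norm_sub_sq_le (hf : StrongConvexOn univ m f) (hc : ∀ w, c ≤ f w)
    (x y : E) : m / 4 * ‖x - y‖ ^ 2 ≤ (f x - c) + (f y - c) := by
  have hmid := hf.2 (mem_univ x) (mem_univ y) (by norm_num : (0 : ℝ) ≤ 1 / 2)
    (by norm_num : (0 : ℝ) ≤ 1 / 2) (by norm_num)
  have := hc ((1 / 2 : ℝ) • x + (1 / 2 : ℝ) • y)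
  simp only [smul_eq_mul] at hmid
  linarith

theorem StrongConvexOn.cauchySeq_of_tendsto (hf : StrongConvexOn univ m f) (hm : 0 < m)
    (hc : ∀ w, c ≤ f w) {u : ℕ → E} (hu : Tendsto (f ∘ u) atTop (𝓝 c)) : CauchySeq u := by
  refine Metric.cauchySeq_iff.2 fun δ hδ ↦ ?_
  have hsmall : ∀ᶠ n in atTop, f (u n) - c < m / 8 * δ ^ 2 := by
    have := hu.sub_const c
    rw [sub_self] at this
    exact this.eventually (gt_mem_nhds (by positivity))
  obtain ⟨N, hN⟩ := eventually_atTop.1 hsmall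
  refine ⟨N, fun j hj k hk ↦ ?_⟩
  have hjk := hf.mul_norm_sub_sq_le hc (u j) (u k)
  have hsq : ‖u j - u k‖ ^ 2 < δ ^ 2 := by
    have := hN j hj
    have := hN k hk
    nlinarith
  rw [dist_eq_norm]
  exact lt_of_pow_lt_pow_left₀ 2 hδ.le hsq

theorem StrongConvexOn.exists_isMinOn [CompleteSpace E] (hf : StrongConvexOn univ m f)
    (hm : 0 < m) (hcont : Continuous f) (hbdd : BddBelow (range f)) :
    ∃ z, IsMinOn f univ z := by
  obtain ⟨v, -, hv, hv_mem⟩ := exists_seq_tendsto_sInf (range_nonempty f) hbdd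
  choose u hu using hv_mem
  have hle : ∀ w, sInf (range f) ≤ f w := fun w ↦ csInf_le hbdd (mem_range_self w)
  have hfu : Tendsto (f ∘ u) atTop (𝓝 (sInf (range f))) := by
    simpa only [Function.comp_def, hu] using hv
  obtain ⟨z, hz⟩ := cauchySeq_tendsto_of_complete (hf.cauchySeq_of_tendsto hm hle hfu)
  have hfz : f z = sInf (range f) := tendsto_nhds_unique ((hcont.tendsto z).comp hz) hfu
  exact ⟨z, isMinOn_univ_iff.2 fun w ↦ hfz ▸ hle w⟩

end StrongConvex

section Regularization

variable {E : Type*} [NormedAddCommGroup E] [InnerProductSpace ℝ E] [CompleteSpace E]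
  {h : E → ℝ} {G : E → E}

/-- The witness minimizes `h + ε ‖·‖²`, where the first-order condition reads `G z = -2ε z`. -/
theorem HasSubgradients.exists_norm_sq_le (hh : HasSubgradients h G) (hcont : Continuous h)
    (hG : Continuous G) {L : ℝ} (hL : ∀ z, L ≤ h z) {ε : ℝ} (hε : 0 < ε) :
    ∃ z, ‖G z‖ ^ 2 ≤ 4 * ε * (h 0 - L) := by
  set f := h + fun x ↦ ε * ‖x‖ ^ 2 with hf
  have hsub : HasSubgradients f (G + ε • fun z : E ↦ (2 : ℝ) • z) :=
    hh.add (hasSubgradients_norm_sq.const_mul hε.le)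
  have hstrong : StrongConvexOn univ (2 * ε) f := by
    rw [strongConvexOn_iff_convex]
    convert hh.convexOn using 2 with x
    simp only [hf, Pi.add_apply]
    ring
  have hfL : ∀ x, L ≤ f x := fun x ↦ by
    simp only [hf, Pi.add_apply]
    nlinarith [hL x, sq_nonneg ‖x‖]
  obtain ⟨z, hz⟩ := hstrong.exists_isMinOn (by positivity) (by fun_prop)
    ⟨L, forall_mem_range.2 hfL⟩
  have hstat : G z = -((2 * ε) • z) := by
    have := hsub.eq_zero_of_isMinOn hz (hG.add (by fun_prop)).continuousAt
    simp only [Pi.add_apply, Pi.smul_apply, smul_smul] at this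
    exact eq_neg_of_add_eq_zero_left (by rwa [mul_comm])
  have hbound : ε * ‖z‖ ^ 2 ≤ h 0 - L := by
    have := isMinOn_univ_iff.1 hz 0
    simp only [hf, Pi.add_apply, norm_zero] at this
    linarith [hL z]
  refine ⟨z, ?_⟩
  rw [hstat, norm_neg, norm_smul, Real.norm_of_nonneg (by positivity)]
  nlinarith

theorem HasSubgradients.zero_mem_closure_range (hh : HasSubgradients h G)
    (hcont : Continuous h) (hG : Continuous G) (hbdd : BddBelow (range h)) :
    (0 : E) ∈ closure (range G) := by
  obtain ⟨L, hL⟩ := hbdd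
  have hL' : ∀ z, L ≤ h z := forall_mem_range.1 hL
  refine Metric.mem_closure_iff.2 fun δ hδ ↦ ?_
  have hC : 0 ≤ h 0 - L := sub_nonneg.2 (hL' 0)
  obtain ⟨z, hz⟩ := hh.exists_norm_sq_le hcont hG hL'
    (ε := δ ^ 2 / (4 * (h 0 - L + 1))) (by positivity)
  refine ⟨G z, mem_range_self z, ?_⟩
  rw [dist_zero_left]
  refine lt_of_pow_lt_pow_left₀ 2 hδ.le (hz.trans_lt ?_)
  rw [mul_div_assoc', div_mul_eq_mul_div, div_lt_iff₀ (by positivity)]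
  nlinarith

end Regularization

theorem infDist_sq_le_norm_sub_sq {X : Type*} [SeminormedAddCommGroup X] {K : Set X} {u : X}
    (hu : u ∈ K) (x : X) : infDist x K ^ 2 ≤ ‖x - u‖ ^ 2 := by
  gcongr
  · exact infDist_nonneg
  · simpa only [dist_eq_norm] using infDist_le_dist_of_mem hu

section ChebyshevSet

variable {H : Type*} [NormedAddCommGroup H] [InnerProductSpace ℝ H] {K : Set H}

theorem hasSubgradients_norm_sub_sq_sub_infDist_sq {P : H → H}
    (hP : ∀ x, P x ∈ K ∧ ‖x - P x‖ = infDist x K) (m : H) :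
    HasSubgradients (fun z ↦ ‖z - m‖ ^ 2 - infDist z K ^ 2) fun z ↦ (2 : ℝ) • (P z - m) := by
  intro z w
  have hw := infDist_sq_le_norm_sub_sq (hP z).1 w
  dsimp only
  rw [← (hP z).2]
  simp only [norm_sub_sq_real, inner_sub_left, inner_sub_right, real_inner_smul_left] at hw ⊢
  linarith [real_inner_comm (P z) w, real_inner_comm (P z) z, real_inner_comm m w,
    real_inner_comm m z]

theorem norm_sq_sub_le_norm_sub_sq_sub_infDist_sq {a b : H} (ha : a ∈ K) (hb : b ∈ K) {s t : ℝ}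
    (hs : 0 ≤ s) (ht : 0 ≤ t) (hst : s + t = 1) (z : H) :
    ‖s • a + t • b‖ ^ 2 - s * ‖a‖ ^ 2 - t * ‖b‖ ^ 2 ≤
      ‖z - (s • a + t • b)‖ ^ 2 - infDist z K ^ 2 := by
  have hda := mul_le_mul_of_nonneg_left (infDist_sq_le_norm_sub_sq ha z) hs
  have hdb := mul_le_mul_of_nonneg_left (infDist_sq_le_norm_sub_sq hb z) ht
  have hz : ‖z‖ ^ 2 = s * ‖z‖ ^ 2 + t * ‖z‖ ^ 2 := by rw [← add_mul, hst, one_mul]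
  have hd : infDist z K ^ 2 = s * infDist z K ^ 2 + t * infDist z K ^ 2 := by
    rw [← add_mul, hst, one_mul]
  simp only [norm_sub_sq_real, inner_add_right, real_inner_smul_right] at hda hdb ⊢
  linarith

theorem smul_add_smul_mem_closure [CompleteSpace H] {P : H → H}
    (hP : ∀ x, P x ∈ K ∧ ‖x - P x‖ = infDist x K) (hPc : Continuous P) {a b : H} (ha : a ∈ K)
    (hb : b ∈ K) {s t : ℝ} (hs : 0 ≤ s) (ht : 0 ≤ t) (hst : s + t = 1) :
    s • a + t • b ∈ closure K := by
  set m := s • a + t • b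
  have hsub := hasSubgradients_norm_sub_sq_sub_infDist_sq hP m
  have hbdd : BddBelow (range fun z ↦ ‖z - m‖ ^ 2 - infDist z K ^ 2) :=
    ⟨_, forall_mem_range.2 (norm_sq_sub_le_norm_sub_sq_sub_infDist_sq ha hb hs ht hst)⟩
  have h0 := hsub.zero_mem_closure_range
    ((continuous_id.sub continuous_const).norm.pow 2 |>.sub ((continuous_infDist_pt K).pow 2))
    (by fun_prop) hbdd
  refine Metric.mem_closure_iff.2 fun δ hδ ↦ ?_
  obtain ⟨-, ⟨z, rfl⟩, hz⟩ := Metric.mem_closure_iff.1 h0 (2 * δ) (by positivity)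
  refine ⟨P z, (hP z).1, ?_⟩
  rw [dist_zero_left, norm_smul, Real.norm_two] at hz
  rw [dist_comm, dist_eq_norm]
  linarith

end ChebyshevSet

theorem stmt_2_general {H : Type*} [NormedAddCommGroup H] [InnerProductSpace ℝ H] [CompleteSpace H]
    (K : Set H)
    (P : H → H) (hP : ∀ x, P x ∈ K ∧ ‖x - P x‖ = infDist x K)
    (hPcont : ∀ (u : ℕ → H) (x : H), Tendsto u atTop (nhds x) →
      Tendsto (fun n => P (u n)) atTop (nhds (P x))) :
    Convex ℝ K := by
  have hPc : Continuous P := SeqContinuous.continuous fun {_ _} hu ↦ hPcont _ _ hu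
  intro a ha b hb s t hs ht hst
  have hm := infDist_zero_of_mem_closure (smul_add_smul_mem_closure hP hPc ha hb hs ht hst)
  have hPm := (hP (s • a + t • b)).2
  rw [hm, norm_eq_zero, sub_eq_zero] at hPm
  exact hPm ▸ (hP _).1

/-- In a real Hilbert space, every Chebyshev set whose metric projection is
(sequentially) continuous is convex. -/
theorem stmt_2 {H : Type*} [NormedAddCommGroup H] [InnerProductSpace ℝ H] [CompleteSpace H]
    (K : Set H)
    (hcheb : ∀ x : H, ∃! v, v ∈ K ∧ ‖x - v‖ = infDist x K)
    (P : H → H) (hP : ∀ x, P x ∈ K ∧ ‖x - P x‖ = infDist x K)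
    (hPcont : ∀ (u : ℕ → H) (x : H), Tendsto u atTop (nhds x) →
      Tendsto (fun n => P (u n)) atTop (nhds (P x))) :
    Convex ℝ K :=
  stmt_2_general K P hP hPcont
end

section
/- Every weakly closed Chebyshev set in a real Hilbert space is convex. -/
/-!
Let `a, b ∈ K`, `m = s • a + t • b` and `C = s t ‖a - b‖²`; then `d(x)² ≤ ‖x - m‖² + C` for all
`x`, where `d = infDist · K`. For `ε > 0` the function `Φ = ‖· - m‖² - d² + ε ‖· - m‖²` is a
supremum of weakly continuous affine functions and is coercive, so by weak compactness of balls it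
has a global minimiser `x`. Weak closedness of `K` makes the nearest-point map `P` continuous from
the norm to the weak topology, which turns minimality into the first-order condition
`P x - m = -ε (x - m)`. Hence `d(m)² ≤ ‖P x - m‖² ≤ ε C` for every `ε > 0`, so `m ∈ K`.
-/

open Metric Filter Set Topology InnerProductSpace
open scoped RealInnerProductSpace

section Semicontinuity

variable {α ι β : Type*} [TopologicalSpace α]

theorem lowerSemicontinuous_of_forall_le_of_exists_eq [Preorder β] {f : α → β} {g : ι → α → β}
    (hg : ∀ i, LowerSemicontinuous (g i)) (hle : ∀ i x, g i x ≤ f x)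
    (heq : ∀ x, ∃ i, g i x = f x) : LowerSemicontinuous f := by
  intro x y hy
  obtain ⟨i, hi⟩ := heq x
  filter_upwards [hg i x y (show y < g i x by rwa [hi])] with x' hx' using hx'.trans_le (hle i x')

theorem LowerSemicontinuous.exists_forall_le_of_isCompact [LinearOrder β] {f : α → β}
    (hf : LowerSemicontinuous f) {s : Set α} (hs : IsCompact s) {x₀ : α}
    (hsub : f ⁻¹' Iic (f x₀) ⊆ s) : ∃ x, ∀ y, f x ≤ f y := by
  have hne : (f ⁻¹' Iic (f x₀)).Nonempty := ⟨x₀, mem_preimage.2 le_rfl⟩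
  obtain ⟨x, -, hx⟩ := LowerSemicontinuousOn.exists_isMinOn hne
    (hs.of_isClosed_subset (hf.isClosed_preimage (f x₀)) hsub) (hf.lowerSemicontinuousOn _)
  refine ⟨x, fun y => ?_⟩
  rcases le_total (f y) (f x₀) with h | h
  · exact hx h
  · exact (hx (mem_preimage.2 le_rfl)).trans h

end Semicontinuity

section WeakTopology

variable {H : Type*} [NormedAddCommGroup H] [InnerProductSpace ℝ H]

theorem continuous_inner_toWeakSpace_symm (w : H) :
    Continuous fun y : WeakSpace ℝ H => ⟪(toWeakSpace ℝ H).symm y, w⟫ := by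
  refine (WeakBilin.eval_continuous (topDualPairing ℝ H).flip (innerSL ℝ w)).congr fun y => ?_
  exact real_inner_comm _ _

theorem continuous_toWeakSpace : Continuous (toWeakSpace ℝ H) :=
  (toWeakSpaceCLM ℝ H).continuous

theorem lowerSemicontinuous_norm_sub_sq_toWeakSpace_symm (m : H) :
    LowerSemicontinuous fun y : WeakSpace ℝ H => ‖(toWeakSpace ℝ H).symm y - m‖ ^ 2 := by
  refine lowerSemicontinuous_of_forall_le_of_exists_eq
    (g := fun w y => 2 * ⟪(toWeakSpace ℝ H).symm y - m, w⟫ - ‖w‖ ^ 2) (fun w => ?_)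
    (fun w y => ?_) (fun y => ⟨(toWeakSpace ℝ H).symm y - m, ?_⟩)
  · simp only [inner_sub_left]
    exact (((continuous_inner_toWeakSpace_symm w).sub continuous_const).const_mul 2
      |>.sub continuous_const).lowerSemicontinuous
  · have := norm_sub_sq_real ((toWeakSpace ℝ H).symm y - m) w
    nlinarith [sq_nonneg ‖(toWeakSpace ℝ H).symm y - m - w‖]
  · simp only [real_inner_self_eq_norm_sq]; ring

theorem isClosed_toWeakSpace_closedBall (c : H) (r : ℝ) :
    IsClosed (toWeakSpace ℝ H '' closedBall c r) := by
  have h := (convex_closedBall c r).toWeakSpace_closure ℝ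
  rw [isClosed_closedBall.closure_eq] at h
  exact h ▸ isClosed_closure

/-- Banach–Alaoglu, transported to `H` along the Riesz isomorphism `toDual`. -/
theorem isCompact_toWeakSpace_closedBall [CompleteSpace H] (c : H) (r : ℝ) :
    IsCompact (toWeakSpace ℝ H '' closedBall c r) := by
  set φ : WeakDual ℝ H → WeakSpace ℝ H :=
    fun f => toWeakSpace ℝ H ((toDual ℝ H).symm (WeakDual.toStrongDual f))
  have hφ : Continuous φ := by
    refine WeakBilin.continuous_of_continuous_eval _ fun g => ?_
    refine (WeakDual.eval_continuous ((toDual ℝ H).symm g)).congr fun f => ?_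
    change WeakDual.toStrongDual f ((toDual ℝ H).symm g) =
      g ((toDual ℝ H).symm (WeakDual.toStrongDual f))
    rw [← toDual_symm_apply, ← toDual_symm_apply, real_inner_comm]
  convert (WeakDual.isCompact_closedBall (toDual ℝ H c) r).image hφ using 1
  ext y
  simp only [mem_image, mem_preimage, φ]
  constructor
  · rintro ⟨x, hx, rfl⟩
    exact ⟨StrongDual.toWeakDual (toDual ℝ H x), by simpa using hx, by simp⟩
  · rintro ⟨f, hf, rfl⟩
    exact ⟨_, by simpa [← (toDual ℝ H).symm.dist_map] using hf, rfl⟩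

end WeakTopology

section Chebyshev

variable {E : Type*} [NormedAddCommGroup E]

theorem infDist_le_norm_sub {K : Set E} {x v : E} (hv : v ∈ K) : infDist x K ≤ ‖x - v‖ :=
  dist_eq_norm x v ▸ infDist_le_dist_of_mem hv

def IsChebyshevSet (K : Set E) : Prop :=
  ∀ x : E, ∃! v, v ∈ K ∧ ‖x - v‖ = infDist x K

namespace IsChebyshevSet

variable {K : Set E} (hK : IsChebyshevSet K)
include hK

noncomputable def proj (x : E) : E := (hK x).exists.choose

theorem proj_mem (x : E) : hK.proj x ∈ K := (hK x).exists.choose_spec.1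

theorem norm_sub_proj (x : E) : ‖x - hK.proj x‖ = infDist x K := (hK x).exists.choose_spec.2

theorem eq_proj {x v : E} (hv : v ∈ K) (hxv : ‖x - v‖ ≤ infDist x K) : v = hK.proj x :=
  (hK x).unique ⟨hv, le_antisymm hxv (infDist_le_norm_sub hv)⟩ ⟨hK.proj_mem x, hK.norm_sub_proj x⟩

end IsChebyshevSet

end Chebyshev

section Hilbert

variable {H : Type*} [NormedAddCommGroup H] [InnerProductSpace ℝ H]

theorem norm_sub_sq_add_mul_norm_sq (v w : H) {s t : ℝ} (hst : s + t = 1) :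
    s * ‖v + t • w‖ ^ 2 + t * ‖v - s • w‖ ^ 2 = ‖v‖ ^ 2 + s * t * ‖w‖ ^ 2 := by
  rw [norm_add_sq_real, norm_sub_sq_real, inner_smul_right, inner_smul_right, norm_smul,
    norm_smul, mul_pow, mul_pow, Real.norm_eq_abs, Real.norm_eq_abs, sq_abs, sq_abs]
  linear_combination (‖v‖ ^ 2 + s * t * ‖w‖ ^ 2) * hst

theorem sq_infDist_le_norm_sub_sq_add {K : Set H} {a b : H} (ha : a ∈ K) (hb : b ∈ K) {s t : ℝ}
    (hs : 0 ≤ s) (ht : 0 ≤ t) (hst : s + t = 1) (x : H) :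
    infDist x K ^ 2 ≤ ‖x - (s • a + t • b)‖ ^ 2 + s * t * ‖a - b‖ ^ 2 := by
  have hda := pow_le_pow_left₀ infDist_nonneg (infDist_le_norm_sub (x := x) ha) 2
  have hdb := pow_le_pow_left₀ infDist_nonneg (infDist_le_norm_sub (x := x) hb) 2
  have hxa : x - a = (x - (s • a + t • b)) + t • (b - a) := by
    obtain rfl : s = 1 - t := by linarith
    module
  have hxb : x - b = (x - (s • a + t • b)) - s • (b - a) := by
    obtain rfl : s = 1 - t := by linarith
    module
  calc infDist x K ^ 2 ≤ s * ‖x - a‖ ^ 2 + t * ‖x - b‖ ^ 2 := by nlinarith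
    _ = ‖x - (s • a + t • b)‖ ^ 2 + s * t * ‖a - b‖ ^ 2 := by
      rw [hxa, hxb, norm_sub_sq_add_mul_norm_sq _ _ hst, norm_sub_rev b a]

theorem norm_sub_sq_sub_norm_sub_sq (x m k : H) :
    ‖x - m‖ ^ 2 - ‖x - k‖ ^ 2 = 2 * ⟪x, k - m⟫ + (‖m‖ ^ 2 - ‖k‖ ^ 2) := by
  rw [norm_sub_sq_real, norm_sub_sq_real, inner_sub_right]; ring

theorem sub_le_inner_of_norm_sub_eq_infDist {K : Set H} {m x y p : H} (hp : p ∈ K)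
    (hyp : ‖y - p‖ = infDist y K) :
    (‖y - m‖ ^ 2 - infDist y K ^ 2) - (‖x - m‖ ^ 2 - infDist x K ^ 2) ≤ 2 * ⟪y - x, p - m⟫ := by
  have hx : infDist x K ^ 2 ≤ ‖x - p‖ ^ 2 :=
    pow_le_pow_left₀ infDist_nonneg (infDist_le_norm_sub hp) 2
  rw [← hyp]
  have := norm_sub_sq_sub_norm_sub_sq y m p
  have := norm_sub_sq_sub_norm_sub_sq x m p
  rw [inner_sub_left]
  linarith

theorem eq_zero_of_forall_le_of_sub_le_inner {f : H → ℝ} {G : H → H} {x : H}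
    (hmin : ∀ y, f x ≤ f y) (hfG : ∀ y, f y - f x ≤ ⟪y - x, G y⟫)
    (hG : ContinuousAt (fun y => toWeakSpace ℝ H (G y)) x) : G x = 0 := by
  have hdir : ∀ u, 0 ≤ ⟪G x, u⟫ := by
    intro u
    have hray : Tendsto (fun τ : ℝ => x + τ • u) (𝓝[>] 0) (𝓝 x) := by
      have : Continuous fun τ : ℝ => x + τ • u := by fun_prop
      simpa using (this.tendsto 0).mono_left nhdsWithin_le_nhds
    have hlim : Tendsto (fun τ : ℝ => ⟪G (x + τ • u), u⟫) (𝓝[>] 0) (𝓝 ⟪G x, u⟫) := by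
      exact ((continuous_inner_toWeakSpace_symm u).tendsto _).comp (hG.tendsto.comp hray)
    refine ge_of_tendsto hlim ?_
    filter_upwards [self_mem_nhdsWithin] with τ (hτ : 0 < τ)
    have h := (sub_nonneg.2 (hmin (x + τ • u))).trans (hfG (x + τ • u))
    rw [add_sub_cancel_left, real_inner_smul_left, real_inner_comm] at h
    exact nonneg_of_mul_nonneg_right h hτ
  simpa [real_inner_self_nonpos] using hdir (-G x)

namespace IsChebyshevSet

variable {K : Set H} (hK : IsChebyshevSet K)
include hK

theorem lowerSemicontinuous_norm_sub_sq_sub_sq_infDist (m : H) :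
    LowerSemicontinuous fun y : WeakSpace ℝ H =>
      ‖(toWeakSpace ℝ H).symm y - m‖ ^ 2 - infDist ((toWeakSpace ℝ H).symm y) K ^ 2 := by
  refine lowerSemicontinuous_of_forall_le_of_exists_eq
    (g := fun (k : K) y => 2 * ⟪(toWeakSpace ℝ H).symm y, k - m⟫ + (‖m‖ ^ 2 - ‖(k : H)‖ ^ 2))
    (fun k => ?_) (fun k y => ?_)
    (fun y => ⟨⟨hK.proj ((toWeakSpace ℝ H).symm y), hK.proj_mem _⟩, ?_⟩)
  · exact (((continuous_inner_toWeakSpace_symm _).const_mul 2).add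
      continuous_const).lowerSemicontinuous
  · rw [← norm_sub_sq_sub_norm_sub_sq]
    gcongr
    · exact infDist_nonneg
    · exact infDist_le_norm_sub k.2
  · rw [← norm_sub_sq_sub_norm_sub_sq, hK.norm_sub_proj]

theorem continuous_toWeakSpace_proj [CompleteSpace H] (hKw : IsClosed (toWeakSpace ℝ H '' K)) :
    Continuous fun x => toWeakSpace ℝ H (hK.proj x) := by
  refine continuous_iff_continuousAt.2 fun z => ?_
  have hnear : ∀ δ > 0, ∀ᶠ x in 𝓝 z, hK.proj x ∈ K ∩ closedBall z (infDist z K + δ) := by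
    intro δ hδ
    filter_upwards [ball_mem_nhds z (half_pos hδ)] with x hx
    refine ⟨hK.proj_mem x, ?_⟩
    rw [mem_ball, dist_eq_norm] at hx
    rw [mem_closedBall, dist_eq_norm]
    have hd := infDist_le_infDist_add_dist (x := x) (y := z) (s := K)
    rw [dist_eq_norm] at hd
    calc ‖hK.proj x - z‖ = ‖(x - z) - (x - hK.proj x)‖ := by rw [sub_sub_sub_cancel_left]
      _ ≤ ‖x - z‖ + ‖x - hK.proj x‖ := norm_sub_le _ _
      _ ≤ infDist z K + δ := by rw [hK.norm_sub_proj]; linarith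
  refine (isCompact_toWeakSpace_closedBall z (infDist z K + 1)).tendsto_nhds_of_unique_mapClusterPt
    ((hnear 1 one_pos).mono fun x hx => mem_image_of_mem _ hx.2) ?_
  rintro _ ⟨q, -, rfl⟩ hq
  have hmem : ∀ δ > 0, q ∈ K ∩ closedBall z (infDist z K + δ) := by
    intro δ hδ
    have hcl : IsClosed (toWeakSpace ℝ H '' (K ∩ closedBall z (infDist z K + δ))) := by
      rw [image_inter (toWeakSpace ℝ H).injective]
      exact hKw.inter (isClosed_toWeakSpace_closedBall _ _)
    obtain ⟨q', hq', hqq'⟩ := hcl.mem_of_mapClusterPt hq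
      ((hnear δ hδ).mono fun x hx => mem_image_of_mem _ hx)
    rwa [← (toWeakSpace ℝ H).injective hqq']
  change toWeakSpace ℝ H q = toWeakSpace ℝ H (hK.proj z)
  rw [← hK.eq_proj (hmem 1 one_pos).1 (le_of_forall_pos_le_add fun δ hδ => ?_)]
  simpa [dist_eq_norm, norm_sub_rev] using (hmem δ hδ).2

theorem sq_infDist_le_mul_of_forall_sq_infDist_le [CompleteSpace H] (hKw : IsClosed (toWeakSpace ℝ H '' K)) {m : H}
    {C : ℝ} (hC : ∀ x, infDist x K ^ 2 ≤ ‖x - m‖ ^ 2 + C) {ε : ℝ} (hε : 0 < ε) :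
    infDist m K ^ 2 ≤ ε * C := by
  set Φ : H → ℝ := fun x => ‖x - m‖ ^ 2 - infDist x K ^ 2 + ε * ‖x - m‖ ^ 2 with hΦ
  have hΦm : ∀ x, Φ x ≤ Φ m → ε * ‖x - m‖ ^ 2 ≤ C := by
    intro x hx
    have := hC x
    simp only [hΦ, sub_self, norm_zero] at hx
    nlinarith [sq_nonneg (infDist m K)]
  obtain ⟨x, hx⟩ : ∃ x, ∀ y, Φ x ≤ Φ y := by
    have hlsc : LowerSemicontinuous fun y : WeakSpace ℝ H => Φ ((toWeakSpace ℝ H).symm y) :=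
      (hK.lowerSemicontinuous_norm_sub_sq_sub_sq_infDist m).add
        ((continuous_const_mul ε).comp_lowerSemicontinuous
          (lowerSemicontinuous_norm_sub_sq_toWeakSpace_symm m) (monotone_mul_left_of_nonneg hε.le))
    obtain ⟨y, hy⟩ := hlsc.exists_forall_le_of_isCompact
      (isCompact_toWeakSpace_closedBall m √(C / ε)) (x₀ := toWeakSpace ℝ H m) fun y hy => by
        refine ⟨(toWeakSpace ℝ H).symm y, ?_, by simp⟩
        rw [mem_closedBall, dist_eq_norm]
        refine Real.le_sqrt_of_sq_le ((le_div_iff₀' hε).2 (hΦm _ ?_))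
        simpa using hy
    exact ⟨(toWeakSpace ℝ H).symm y, fun y' => by simpa using hy (toWeakSpace ℝ H y')⟩
  have hproj : hK.proj x - m = -(ε • (x - m)) := by
    set G : H → H := fun y => (2 : ℝ) • (hK.proj y - m) + ε • ((y - m) + (x - m)) with hG
    have hG0 := eq_zero_of_forall_le_of_sub_le_inner (G := G) hx (fun y => ?_) ?_
    · have h2 : (2 : ℝ) • (hK.proj x - m + ε • (x - m)) = 0 := by
        rw [← hG0, hG]; module
      exact eq_neg_of_add_eq_zero_left ((smul_eq_zero.1 h2).resolve_left two_ne_zero)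
    · have hψ := sub_le_inner_of_norm_sub_eq_infDist (x := x) (m := m) (hK.proj_mem y)
        (hK.norm_sub_proj y)
      have hq : ⟪y - x, (y - m) + (x - m)⟫ = ‖y - m‖ ^ 2 - ‖x - m‖ ^ 2 := by
        rw [show y - x = (y - m) - (x - m) by abel, inner_sub_left, inner_add_right,
          inner_add_right, real_inner_self_eq_norm_sq, real_inner_self_eq_norm_sq,
          real_inner_comm (x - m)]
        ring
      simp only [hΦ, hG, inner_add_right, real_inner_smul_right, hq]
      linarith
    · have hP := hK.continuous_toWeakSpace_proj hKw
      have hI := continuous_toWeakSpace (H := H)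
      simp only [hG, map_add, map_smul, map_sub]
      fun_prop
  calc infDist m K ^ 2 ≤ ‖m - hK.proj x‖ ^ 2 :=
        pow_le_pow_left₀ infDist_nonneg (infDist_le_norm_sub (hK.proj_mem x)) 2
    _ = ε * (ε * ‖x - m‖ ^ 2) := by
        rw [norm_sub_rev, hproj, norm_neg, norm_smul, Real.norm_of_nonneg hε.le]; ring
    _ ≤ ε * C := mul_le_mul_of_nonneg_left (hΦm x (hx m)) hε.le

theorem mem_of_forall_sq_infDist_le [CompleteSpace H] (hKw : IsClosed (toWeakSpace ℝ H '' K))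
    {m : H} {C : ℝ} (hC : ∀ x, infDist x K ^ 2 ≤ ‖x - m‖ ^ 2 + C) : m ∈ K := by
  have hKc : IsClosed K :=
    (toWeakSpace ℝ H).injective.preimage_image K ▸ hKw.preimage continuous_toWeakSpace
  have hlim : Tendsto (fun ε : ℝ => ε * C) (𝓝[>] 0) (𝓝 0) := by
    simpa using ((continuous_mul_const C).tendsto (0 : ℝ)).mono_left nhdsWithin_le_nhds
  have hsq : infDist m K ^ 2 ≤ 0 := ge_of_tendsto hlim <| eventually_nhdsWithin_of_forall
    fun ε hε => hK.sq_infDist_le_mul_of_forall_sq_infDist_le hKw hC hε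
  exact (hKc.mem_iff_infDist_zero ⟨_, hK.proj_mem 0⟩).2 <|
    pow_eq_zero_iff two_ne_zero |>.1 (le_antisymm hsq (sq_nonneg _))

end IsChebyshevSet

end Hilbert

/-- Every weakly closed Chebyshev set in a real Hilbert space is convex. -/
theorem stmt_3 {H : Type*} [NormedAddCommGroup H] [InnerProductSpace ℝ H] [CompleteSpace H]
    (K : Set H)
    (hKw : IsClosed ((toWeakSpace ℝ H) '' K))
    (hcheb : ∀ x : H, ∃! v, v ∈ K ∧ ‖x - v‖ = infDist x K) :
    Convex ℝ K := by
  intro a ha b hb s t hs ht hst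
  exact IsChebyshevSet.mem_of_forall_sq_infDist_le hcheb hKw
    (sq_infDist_le_norm_sub_sq_add ha hb hs ht hst)
end

section
/- Every uniformly convex Banach space is reflexive (Milman–Pettis theorem). -/
/-!
By Goldstine's lemma, a norm-one element `ξ` of the bidual can be matched, on finitely many
functionals at once and up to any `τ > 0`, by a point of the unit ball. Choose `f` in the dual unit
ball with `ξ f > 1 - δ`. Uniform convexity makes the slice `{x : ‖x‖ ≤ 1, 1 - δ < f x}` of diameter
less than `ε`, and every approximant of `ξ` on `f` lies in it. Hence a single approximant `x₀` of `ξ`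
on `f` is `ε`-close to an approximant of `ξ` on `f` and `g`, for every `g` in the dual unit ball, so
`‖ξ - x₀‖ ≤ 2ε`. The canonical image is therefore dense in the unit sphere of the bidual; it is also
closed, being the isometric image of a complete space, and it is a subspace.
-/

open Metric NormedSpace

section Goldstine

variable {E : Type*} [NormedAddCommGroup E] [NormedSpace ℝ E]

theorem mem_closure_pi_image_closedBall_of_norm_le {ι : Type*} [Fintype ι]
    (ξ : StrongDual ℝ (StrongDual ℝ E)) (f : ι → StrongDual ℝ E) {r : ℝ} (hr : 0 < r)
    (hξ : ‖ξ‖ ≤ r) :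
    (fun i ↦ ξ (f i)) ∈ closure (ContinuousLinearMap.pi f '' closedBall 0 r) := by
  classical
  by_contra hv
  obtain ⟨φ, u, hφu, huv⟩ := geometric_hahn_banach_closed_point
    ((convex_closedBall 0 r).linear_image (ContinuousLinearMap.pi f).toLinearMap).closure
    isClosed_closure hv
  set c : ι → ℝ := fun i ↦ φ fun j ↦ if i = j then 1 else 0
  have hφ (v : ι → ℝ) : φ v = ∑ i, v i * c i := by
    simpa using φ.toLinearMap.pi_apply_eq_sum_univ v
  -- `h = φ ∘ pi f`, written so that `ξ h` can be computed
  set h : StrongDual ℝ E := ∑ i, c i • f i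
  have h_lt : ∀ x ∈ closedBall (0 : E) r, h x < u := fun x hx ↦ by
    have := hφu _ (subset_closure ⟨x, hx, rfl⟩)
    simpa [h, hφ, mul_comm] using this
  have hh : ‖h‖ ≤ u / r := h.opNorm_bound_of_ball_bound hr u fun x hx ↦ by
    have := h_lt (-x) (by simpa using hx)
    rw [map_neg] at this
    exact abs_le.2 ⟨by linarith, (h_lt x hx).le⟩
  have hξh : ξ h = φ fun i ↦ ξ (f i) := by simp [h, hφ, mul_comm]
  have : ξ h ≤ u := calc
    ξ h ≤ ‖ξ‖ * ‖h‖ := (le_abs_self _).trans (ξ.le_opNorm h)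
    _ ≤ r * (u / r) := by gcongr
    _ = u := by field_simp
  linarith

theorem exists_norm_le_forall_abs_apply_sub_lt {ι : Type*} [Fintype ι]
    (ξ : StrongDual ℝ (StrongDual ℝ E)) (f : ι → StrongDual ℝ E) {r : ℝ} (hr : 0 < r)
    (hξ : ‖ξ‖ ≤ r) {τ : ℝ} (hτ : 0 < τ) :
    ∃ x : E, ‖x‖ ≤ r ∧ ∀ i, |f i x - ξ (f i)| < τ := by
  obtain ⟨_, ⟨x, hx, rfl⟩, hdist⟩ :=
    Metric.mem_closure_iff.1 (mem_closure_pi_image_closedBall_of_norm_le ξ f hr hξ) τ hτ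
  refine ⟨x, mem_closedBall_zero_iff.1 hx, fun i ↦ ?_⟩
  rw [← Real.dist_eq, dist_comm]
  exact (dist_pi_lt_iff hτ).1 hdist i

end Goldstine

theorem ContinuousLinearMap.exists_norm_le_one_lt_apply {E : Type*} [NormedAddCommGroup E]
    [NormedSpace ℝ E] (φ : StrongDual ℝ E) {r : ℝ} (hr : r < ‖φ‖) :
    ∃ x, ‖x‖ ≤ 1 ∧ r < φ x := by
  obtain ⟨x, hx, hrx⟩ := φ.exists_lt_apply_of_lt_opNorm hr
  rcases le_or_gt 0 (φ x) with h | h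
  · exact ⟨x, hx.le, by rwa [Real.norm_of_nonneg h] at hrx⟩
  · refine ⟨-x, by simpa using hx.le, ?_⟩
    rw [Real.norm_of_nonpos h.le] at hrx
    simpa using hrx

section UniformConvex

variable {E : Type*} [NormedAddCommGroup E] [NormedSpace ℝ E] [UniformConvexSpace E]

theorem exists_forall_norm_sub_lt_of_lt_apply {ε : ℝ} (hε : 0 < ε) :
    ∃ δ > 0, ∀ f : StrongDual ℝ E, ‖f‖ ≤ 1 → ∀ ⦃x y : E⦄, ‖x‖ ≤ 1 → ‖y‖ ≤ 1 →
      1 - δ < f x → 1 - δ < f y → ‖x - y‖ < ε := by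
  obtain ⟨δ, hδ, hconv⟩ := exists_forall_closed_ball_dist_add_le_two_sub E hε
  refine ⟨δ / 2, half_pos hδ, fun f hf x y hx hy hfx hfy ↦ ?_⟩
  by_contra! hxy
  have hf_le : f (x + y) ≤ ‖x + y‖ :=
    (le_abs_self _).trans ((f.le_of_opNorm_le hf _).trans_eq (one_mul _))
  have := hconv hx hy hxy
  rw [map_add] at hf_le
  linarith

theorem exists_norm_sub_inclusionInDoubleDual_le {ξ : StrongDual ℝ (StrongDual ℝ E)}
    (hξ : ‖ξ‖ = 1) {ε : ℝ} (hε : 0 < ε) :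
    ∃ x : E, ‖ξ - inclusionInDoubleDual ℝ E x‖ ≤ 2 * ε := by
  obtain ⟨δ, hδ, hslice⟩ := exists_forall_norm_sub_lt_of_lt_apply (E := E) hε
  obtain ⟨f, hf, hξf⟩ := ξ.exists_norm_le_one_lt_apply (r := 1 - δ / 2) (by linarith)
  set τ := min (δ / 2) ε
  have hτ : 0 < τ := by positivity
  have hτδ : τ ≤ δ / 2 := min_le_left _ _
  obtain ⟨x₀, hx₀, hfx₀⟩ :=
    exists_norm_le_forall_abs_apply_sub_lt ξ (fun _ : Unit ↦ f) one_pos hξ.le hτ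
  have hfx₀' : 1 - δ < f x₀ := by linarith [(abs_lt.1 (hfx₀ ())).1]
  refine ⟨x₀, ContinuousLinearMap.opNorm_le_of_unit_norm (by positivity) fun g hg ↦ ?_⟩
  obtain ⟨x₁, hx₁, hfgx₁⟩ := exists_norm_le_forall_abs_apply_sub_lt ξ ![f, g] one_pos hξ.le hτ
  have hfx₁ : |f x₁ - ξ f| < τ := by simpa using hfgx₁ 0
  have hgx₁ : |g x₁ - ξ g| < τ := by simpa using hfgx₁ 1
  have hx₁₀ : ‖x₁ - x₀‖ < ε := hslice f hf hx₁ hx₀ (by linarith [(abs_lt.1 hfx₁).1]) hfx₀'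
  have hgx₁₀ : |g x₁ - g x₀| < ε := by
    rw [← map_sub]
    exact (g.le_of_opNorm_le hg.le _).trans_lt (by simpa using hx₁₀)
  rw [sub_apply, dual_def, Real.norm_eq_abs]
  calc |ξ g - g x₀| ≤ |ξ g - g x₁| + |g x₁ - g x₀| := abs_sub_le _ _ _
    _ ≤ 2 * ε := by rw [abs_sub_comm]; linarith [min_le_right (δ / 2) ε]

theorem mem_closure_range_inclusionInDoubleDual {ξ : StrongDual ℝ (StrongDual ℝ E)}
    (hξ : ‖ξ‖ = 1) : ξ ∈ closure (Set.range (inclusionInDoubleDual ℝ E)) := by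
  refine (Metric.mem_closure_iff (α := StrongDual ℝ (StrongDual ℝ E))).2 fun ε hε ↦ ?_
  obtain ⟨x, hx⟩ := exists_norm_sub_inclusionInDoubleDual_le hξ (ε := ε / 4) (by positivity)
  exact ⟨inclusionInDoubleDual ℝ E x, ⟨x, rfl⟩, by rw [dist_eq_norm ξ]; linarith⟩

end UniformConvex

theorem isClosed_range_inclusionInDoubleDual {E : Type*} [NormedAddCommGroup E]
    [NormedSpace ℝ E] [CompleteSpace E] : IsClosed (Set.range (inclusionInDoubleDual ℝ E)) := by
  have hJ : Isometry (inclusionInDoubleDual ℝ E) := (inclusionInDoubleDualLi ℝ).isometry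
  exact hJ.isClosedEmbedding.isClosed_range

/-- Milman–Pettis: Every uniformly convex Banach space is reflexive. -/
theorem stmt_11 {X : Type*} [NormedAddCommGroup X] [NormedSpace ℝ X] [CompleteSpace X]
    [UniformConvexSpace X] :
    Function.Surjective (NormedSpace.inclusionInDoubleDual ℝ X) := by
  intro ξ
  rcases eq_or_ne ξ 0 with rfl | hξ
  · exact ⟨0, map_zero _⟩
  have hξ₁ : ‖‖ξ‖⁻¹ • ξ‖ = 1 := norm_smul_inv_norm (𝕜 := ℝ) (x := ξ) hξ
  obtain ⟨x, hx⟩ : ‖ξ‖⁻¹ • ξ ∈ Set.range (inclusionInDoubleDual ℝ X) :=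
    isClosed_range_inclusionInDoubleDual.closure_subset
      (mem_closure_range_inclusionInDoubleDual hξ₁)
  exact ⟨‖ξ‖ • x, by rw [map_smul, hx, smul_inv_smul₀ ((norm_ne_zero_iff (a := ξ)).2 hξ)]⟩
end

section
/- Every Chebyshev set in a finite-dimensional real Hilbert space (Euclidean space) is convex. -/
/-!
Let `d` be the distance to `K` and `P` the nearest-point map. The function
`φ x = (‖x‖² - d x²) / 2 = sup_{k ∈ K} (⟪x, k⟫ - ‖k‖² / 2)` is convex and `P y` is a subgradient
of `φ` at `y`; in finite dimension uniqueness of nearest points makes `P` continuous. If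
`z = s • a + t • b` with `a b ∈ K`, then `φ - ⟪·, z⟫` is bounded below, so an approximate minimiser
`x₀` of it exists in the sense of Ekeland. Testing the subgradient inequality along a short
segment from `x₀` and using continuity of `P` gives `‖P x₀ - z‖ ≤ ε`. Hence `z` lies in the
closure of `K`, which is `K` itself.
-/

open Metric Filter Set Topology RealInnerProductSpace

section MetricSpace

variable {X : Type*} [MetricSpace X]

theorem isClosed_of_forall_exists_dist_eq_infDist {K : Set X}
    (h : ∀ x, ∃ v ∈ K, dist x v = infDist x K) : IsClosed K := by
  refine closure_subset_iff_isClosed.1 fun x hx => ?_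
  obtain ⟨v, hvK, hv⟩ := h x
  have hxv : x = v := dist_eq_zero.1 (hv.trans (infDist_zero_of_mem_closure hx))
  exact hxv ▸ hvK

theorem eventually_mem_inter_closedBall_of_dist_eq_infDist {K : Set X} {P : X → X}
    (hPK : ∀ y, P y ∈ K) (hP : ∀ y, dist y (P y) = infDist y K) (x : X) {ε : ℝ} (hε : 0 < ε) :
    ∀ᶠ y in 𝓝 x, P y ∈ K ∩ closedBall x (infDist x K + ε) := by
  filter_upwards [ball_mem_nhds x (half_pos hε)] with y hy
  refine ⟨hPK y, ?_⟩
  rw [mem_ball] at hy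
  rw [mem_closedBall]
  calc dist (P y) x ≤ dist (P y) y + dist y x := dist_triangle _ _ _
    _ = infDist y K + dist y x := by rw [dist_comm, hP]
    _ ≤ infDist x K + dist y x + dist y x := by gcongr; exact infDist_le_infDist_add_dist
    _ ≤ infDist x K + ε := by linarith

theorem continuous_of_dist_eq_infDist [ProperSpace X] {K : Set X} (hK : IsClosed K)
    {P : X → X} (hPK : ∀ y, P y ∈ K) (hP : ∀ y, dist y (P y) = infDist y K)
    (huniq : ∀ y v, v ∈ K → dist y v = infDist y K → v = P y) : Continuous P := by
  refine continuous_iff_continuousAt.2 fun x => ?_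
  have hnear : ∀ ε > 0, ∀ᶠ y in 𝓝 x, P y ∈ K ∩ closedBall x (infDist x K + ε) :=
    fun _ hε => eventually_mem_inter_closedBall_of_dist_eq_infDist hPK hP x hε
  refine (isCompact_closedBall x (infDist x K + 1)).tendsto_nhds_of_unique_mapClusterPt
    ((hnear 1 one_pos).mono fun _ hy => hy.2) fun q _ hq => ?_
  have hqmem : ∀ ε > 0, q ∈ K ∩ closedBall x (infDist x K + ε) := fun ε hε =>
    (hK.inter isClosed_closedBall).mem_of_mapClusterPt hq (hnear ε hε)
  have hqK : q ∈ K := (hqmem 1 one_pos).1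
  refine huniq x q hqK (le_antisymm ?_ (infDist_le_dist_of_mem hqK))
  refine le_of_forall_pos_le_add fun ε hε => ?_
  rw [dist_comm]
  exact (hqmem ε hε).2

/-- A weak form of Ekeland's variational principle, obtained by minimising the coercive
function `h + ε * dist · a`. -/
theorem exists_forall_le_add_mul_dist [ProperSpace X] [Nonempty X] {h : X → ℝ}
    (hh : Continuous h) (hbdd : BddBelow (range h)) {ε : ℝ} (hε : 0 < ε) :
    ∃ x₀, ∀ y, h x₀ ≤ h y + ε * dist y x₀ := by
  obtain ⟨C, hC⟩ := hbdd
  obtain ⟨a⟩ := ‹Nonempty X›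
  have hcoercive : Tendsto (fun y => h y + ε * dist y a) (cocompact X) atTop :=
    tendsto_atTop_add_left_of_le _ C (fun y => hC (mem_range_self y))
      ((tendsto_dist_right_cocompact_atTop a).const_mul_atTop hε)
  obtain ⟨x₀, hx₀⟩ :=
    (show Continuous fun y => h y + ε * dist y a by fun_prop).exists_forall_le hcoercive
  refine ⟨x₀, fun y => ?_⟩
  have hmin := hx₀ y
  have htri := dist_triangle y x₀ a
  nlinarith

end MetricSpace

section InnerProductSpace

variable {E : Type*} [NormedAddCommGroup E] [InnerProductSpace ℝ E]

theorem norm_sub_le_of_forall_neg_mul_norm_le_inner {g : E → E} {x₀ z : E} {ε : ℝ}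
    (hε : 0 ≤ ε) (hg : ContinuousAt g x₀)
    (h : ∀ y, -(ε * ‖y - x₀‖) ≤ ⟪y - x₀, g y - z⟫) : ‖g x₀ - z‖ ≤ ε := by
  set w := g x₀ - z
  have hbound : ∀ t : ℝ, 0 < t → ⟪w, g (x₀ - t • w) - z⟫ ≤ ε * ‖w‖ := by
    intro t ht
    have := h (x₀ - t • w)
    rw [sub_sub_cancel_left, norm_neg, norm_smul, inner_neg_left, inner_smul_left,
      Real.norm_of_nonneg ht.le] at this
    simp only [RCLike.conj_to_real] at this
    nlinarith
  have hlim : Tendsto (fun t : ℝ => ⟪w, g (x₀ - t • w) - z⟫) (𝓝[>] 0) (𝓝 ⟪w, w⟫) := by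
    have hpath : ContinuousAt (fun t : ℝ => g (x₀ - t • w)) 0 :=
      hg.comp_of_eq (by fun_prop) (by simp)
    have : Tendsto (fun t : ℝ => ⟪w, g (x₀ - t • w) - z⟫) (𝓝 0)
        (𝓝 ⟪w, g (x₀ - (0 : ℝ) • w) - z⟫) :=
      tendsto_const_nhds.inner (hpath.tendsto.sub tendsto_const_nhds)
    rw [zero_smul, sub_zero] at this
    exact this.mono_left nhdsWithin_le_nhds
  have hsq : ‖w‖ ^ 2 ≤ ε * ‖w‖ := by
    rw [← real_inner_self_eq_norm_sq]
    exact le_of_tendsto hlim (eventually_nhdsWithin_of_forall fun t ht => hbound t ht)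
  nlinarith [norm_nonneg w]

theorem mem_closure_range_of_add_inner_le [ProperSpace E] {f : E → ℝ} {g : E → E}
    (hf : Continuous f) (hg : Continuous g) (hfg : ∀ x y, f y + ⟪x - y, g y⟫ ≤ f x) {z : E}
    (hz : BddBelow (range fun x => f x - ⟪x, z⟫)) : z ∈ closure (range g) := by
  refine Metric.mem_closure_iff.2 fun ε hε => ?_
  obtain ⟨x₀, hx₀⟩ := exists_forall_le_add_mul_dist (h := fun x => f x - ⟪x, z⟫)
    (by fun_prop) hz (half_pos hε)
  have hmono : ∀ y, -(ε / 2 * ‖y - x₀‖) ≤ ⟪y - x₀, g y - z⟫ := by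
    intro y
    have hek := hx₀ y
    have hsub := hfg x₀ y
    rw [dist_eq_norm] at hek
    rw [← neg_sub, inner_neg_left] at hsub
    rw [inner_sub_right, inner_sub_left y x₀ z]
    linarith
  refine ⟨g x₀, mem_range_self x₀, ?_⟩
  rw [dist_comm, dist_eq_norm]
  exact (norm_sub_le_of_forall_neg_mul_norm_le_inner (half_pos hε).le hg.continuousAt
    hmono).trans_lt (half_lt_self hε)

end InnerProductSpace

section InfDistPotential

variable {E : Type*} [NormedAddCommGroup E]

/-- Expanding `‖x - k‖²` shows `infDistPotential K x = sup_{k ∈ K} (⟪x, k⟫ - ‖k‖² / 2)`. -/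
noncomputable def infDistPotential (K : Set E) (x : E) : ℝ :=
  (‖x‖ ^ 2 - infDist x K ^ 2) / 2

theorem continuous_infDistPotential (K : Set E) : Continuous (infDistPotential K) :=
  ((continuous_norm.pow 2).sub ((continuous_infDist_pt K).pow 2)).div_const 2

variable [InnerProductSpace ℝ E] {K : Set E}

theorem inner_sub_half_sq_le_infDistPotential {k : E} (hk : k ∈ K) (x : E) :
    ⟪x, k⟫ - ‖k‖ ^ 2 / 2 ≤ infDistPotential K x := by
  have hle : infDist x K ≤ ‖x - k‖ := by
    simpa [dist_eq_norm] using infDist_le_dist_of_mem (x := x) hk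
  have hexp := norm_sub_sq_real x k
  unfold infDistPotential
  nlinarith [infDist_nonneg (x := x) (s := K)]

theorem infDistPotential_eq_of_norm_sub_eq {x v : E} (hv : ‖x - v‖ = infDist x K) :
    infDistPotential K x = ⟪x, v⟫ - ‖v‖ ^ 2 / 2 := by
  rw [infDistPotential, ← hv, norm_sub_sq_real]
  ring

theorem infDistPotential_add_inner_le {y v : E} (hv : v ∈ K) (hyv : ‖y - v‖ = infDist y K)
    (x : E) : infDistPotential K y + ⟪x - y, v⟫ ≤ infDistPotential K x := by
  rw [infDistPotential_eq_of_norm_sub_eq hyv, inner_sub_left]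
  linarith [inner_sub_half_sq_le_infDistPotential hv x]

theorem bddBelow_infDistPotential_sub_inner {a b : E} (ha : a ∈ K) (hb : b ∈ K) {s t : ℝ}
    (hs : 0 ≤ s) (ht : 0 ≤ t) (hst : s + t = 1) :
    BddBelow (range fun x => infDistPotential K x - ⟪x, s • a + t • b⟫) := by
  refine ⟨-(s * ‖a‖ ^ 2 + t * ‖b‖ ^ 2) / 2, forall_mem_range.2 fun x => ?_⟩
  have hxa := mul_le_mul_of_nonneg_left (inner_sub_half_sq_le_infDistPotential ha x) hs
  have hxb := mul_le_mul_of_nonneg_left (inner_sub_half_sq_le_infDistPotential hb x) ht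
  rw [inner_add_right, inner_smul_right, inner_smul_right]
  have hφ : infDistPotential K x = s * infDistPotential K x + t * infDistPotential K x := by
    rw [← add_mul, hst, one_mul]
  linarith

end InfDistPotential

/-- Every Chebyshev set in a finite-dimensional real Hilbert space is
convex. -/
theorem stmt_19 {E : Type*} [NormedAddCommGroup E] [InnerProductSpace ℝ E]
    [FiniteDimensional ℝ E] (K : Set E)
    (hcheb : ∀ x : E, ∃! v, v ∈ K ∧ ‖x - v‖ = infDist x K) :
    Convex ℝ K := by
  choose P hP huniq using hcheb
  have hPdist : ∀ x, dist x (P x) = infDist x K := fun x => (dist_eq_norm _ _).trans (hP x).2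
  have hK : IsClosed K :=
    isClosed_of_forall_exists_dist_eq_infDist fun x => ⟨P x, (hP x).1, hPdist x⟩
  have hPcont : Continuous P := continuous_of_dist_eq_infDist hK (fun x => (hP x).1) hPdist
    fun x v hv hxv => huniq x v ⟨hv, (dist_eq_norm _ _).symm.trans hxv⟩
  intro a ha b hb s t hs ht hst
  have hz : s • a + t • b ∈ closure (range P) :=
    mem_closure_range_of_add_inner_le (continuous_infDistPotential K) hPcont
      (fun x y => infDistPotential_add_inner_le (hP y).1 (hP y).2 x)
      (bddBelow_infDistPotential_sub_inner ha hb hs ht hst)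
  exact hK.closure_subset_iff.2 (range_subset_iff.2 fun x => (hP x).1) hz
end
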